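/- arXiv:2210.12036 — 4 statements merged into one kernel-verified Lean document; each statement's English description precedes it below -/
import Mathlib

section
/- If two segments p1p3 and p2p4 in the plane cross at a point px, and a point q lies strictly inside the triangle p1 px p4, then the line through q and p1 strictly separates the segments p1p4 and p2p3 except for passing through the endpoint p1 (i.e., the open segments p1p4 \ {p1} and p2p3 lie strictly on opposite sides of the line qp1). -/
open scoped Classical

noncomputable section

/-- The plane. -/
abbrev Pl := ℝ × ℝ
/-- A segment, as an ordered pair of endpoints. -/
abbrev Seg := Pl × Pl

/-- The set of points of a segment. -/
def segSet (s : Seg) : Set Pl := segment ℝ s.1 s.2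

/-- Two segments cross: they intersect in exactly one point which is
not an endpoint of either. -/
def Cross (s t : Seg) : Prop :=
  ∃ x : Pl, segSet s ∩ segSet t = {x} ∧ x ≠ s.1 ∧ x ≠ s.2 ∧ x ≠ t.1 ∧ x ≠ t.2

/-- The line through two points. -/
def lineThrough (p q : Pl) : Set Pl := {x | Collinear ℝ ({p, q, x} : Set Pl)}

/-- A line crosses a segment: they intersect in exactly one point which is
not an endpoint of the segment. -/
def LineCross (l : Set Pl) (s : Seg) : Prop :=
  ∃ x : Pl, l ∩ segSet s = {x} ∧ x ≠ s.1 ∧ x ≠ s.2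

/-- Signed side of the line through `a` and `b` on which `x` lies. -/
def sideVal (a b x : Pl) : ℝ :=
  (b.1 - a.1) * (x.2 - a.2) - (b.2 - a.2) * (x.1 - a.1)

/-- General position: no three (distinct) points of `S` are collinear. -/
def GenPos (S : Set Pl) : Prop :=
  ∀ a ∈ S, ∀ b ∈ S, ∀ c ∈ S, a ≠ b → a ≠ c → b ≠ c → ¬ Collinear ℝ ({a, b, c} : Set Pl)

/-- Strictly convex position. -/
def ConvexPos (S : Set Pl) : Prop := ∀ p ∈ S, p ∉ convexHull ℝ (S \ {p})

/-- A set of segments is a matching: no degenerate segment and all endpoints distinct. -/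
def IsMatching (M : Finset Seg) : Prop :=
  (∀ s ∈ M, s.1 ≠ s.2) ∧
  ∀ s ∈ M, ∀ t ∈ M, s ≠ t → ({s.1, s.2} : Set Pl) ∩ {t.1, t.2} = ∅

/-- A perfect matching on the point set `P`. -/
def IsPM (P : Finset Pl) (M : Finset Seg) : Prop :=
  IsMatching M ∧ (∀ s ∈ M, s.1 ∈ P ∧ s.2 ∈ P) ∧
  ∀ p ∈ P, ∃ s ∈ M, p = s.1 ∨ p = s.2

/-- Number of (unordered) crossing pairs of segments of `M`. -/
def phiX (M : Finset Seg) : ℕ :=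
  Set.ncard {z : Sym2 Seg | ∃ u t : Seg, z = s(u, t) ∧ u ∈ M ∧ t ∈ M ∧ Cross u t}

/-- Number of segments of `M` crossed by the line `l`. -/
def phiLine (l : Set Pl) (M : Finset Seg) : ℕ :=
  Set.ncard {s : Seg | s ∈ M ∧ LineCross l s}

/-- All lines through two points of `P`. -/
def linesOf (P : Finset Pl) : Set (Set Pl) :=
  {l | ∃ p ∈ P, ∃ q ∈ P, p ≠ q ∧ l = lineThrough p q}

/-- The line potential with respect to a set of lines `L`. -/
def phiL (L : Set (Set Pl)) (M : Finset Seg) : ℕ := ∑ᶠ l ∈ L, phiLine l M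

/-- A flip in the matching version: replace a crossing pair by one of the two
non-crossing pairs on the same four endpoints. -/
def IsFlip (M M' : Finset Seg) : Prop :=
  ∃ p1 p2 p3 p4 : Pl,
    Cross (p1, p3) (p2, p4) ∧ (p1, p3) ∈ M ∧ (p2, p4) ∈ M ∧
    ((¬ Cross (p1, p4) (p2, p3) ∧ M' = (M \ {(p1, p3), (p2, p4)}) ∪ {(p1, p4), (p2, p3)}) ∨
     (¬ Cross (p1, p2) (p3, p4) ∧ M' = (M \ {(p1, p3), (p2, p4)}) ∪ {(p1, p2), (p3, p4)}))

/-- `t1, t2` reconnect the four endpoints of `s1, s2` forming a 4-cycle. -/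
def Rewires (s1 s2 t1 t2 : Seg) : Prop :=
  ∃ a b c d : Pl, ({s1.1, s1.2} : Set Pl) = {a, b} ∧ ({s2.1, s2.2} : Set Pl) = {c, d} ∧
    ((({t1.1, t1.2} : Set Pl) = {a, c} ∧ ({t2.1, t2.2} : Set Pl) = {b, d}) ∨
     (({t1.1, t1.2} : Set Pl) = {a, d} ∧ ({t2.1, t2.2} : Set Pl) = {b, c}))

/-- A flip in the multigraph (multiset) version. -/
def IsFlipMS (M M' : Multiset Seg) : Prop :=
  ∃ p1 p2 p3 p4 : Pl, Cross (p1, p3) (p2, p4) ∧ (p1, p3) ∈ M ∧ (p2, p4) ∈ M ∧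
    ∃ t1 t2 : Seg, Rewires (p1, p3) (p2, p4) t1 t2 ∧ ¬ Cross t1 t2 ∧
      M' = t1 ::ₘ t2 ::ₘ ((M.erase (p1, p3)).erase (p2, p4))

/-- A red-blue perfect matching: first coordinates red, second coordinates blue. -/
def IsRBPM (R B : Finset Pl) (M : Finset Seg) : Prop :=
  IsMatching M ∧ (∀ s ∈ M, s.1 ∈ R ∧ s.2 ∈ B) ∧
  (∀ p ∈ R, ∃ s ∈ M, p = s.1) ∧ (∀ p ∈ B, ∃ s ∈ M, p = s.2)

/-- A flip in the red-blue matching version (the replacement pair is forced). -/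
def IsRBFlip (M M' : Finset Seg) : Prop :=
  ∃ r1 b1 r2 b2 : Pl, Cross (r1, b1) (r2, b2) ∧ (r1, b1) ∈ M ∧ (r2, b2) ∈ M ∧
    ¬ Cross (r1, b2) (r2, b1) ∧ M' = (M \ {(r1, b1), (r2, b2)}) ∪ {(r1, b2), (r2, b1)}

/-- `T` is (the edge set of) a tour on `N` points. -/
def IsTour (T : Finset Seg) (N : ℕ) : Prop :=
  3 ≤ N ∧ ∃ v : Fin N → Pl, Function.Injective v ∧
    T = Finset.image (fun i : Fin N => (v i, v (finRotate N i))) Finset.univ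

/-- A flip in the TSP version: remove two crossing tour edges and reconnect the
four endpoints. -/
def IsTSPFlip (T T' : Finset Seg) : Prop :=
  ∃ s1 s2 t1 t2 : Seg, Cross s1 s2 ∧ s1 ∈ T ∧ s2 ∈ T ∧ Rewires s1 s2 t1 t2 ∧
    T' = (T \ {s1, s2}) ∪ {t1, t2}

/-- `a` and `b` are consecutive points on the convex-hull boundary of `Q`. -/
def HullEdge (Q : Finset Pl) (a b : Pl) : Prop :=
  a ∈ Q ∧ b ∈ Q ∧ a ≠ b ∧
  ((∀ c ∈ Q, c ≠ a → c ≠ b → 0 < sideVal a b c) ∨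
   (∀ c ∈ Q, c ≠ a → c ≠ b → sideVal a b c < 0))

/-- The line-potential drop of a flip, independent of the ambient matching. -/
def flipDrop (P : Finset Pl) (p1 p2 p3 p4 : Pl) : ℤ :=
  ∑ᶠ l ∈ linesOf P,
    ((phiLine l {(p1, p3), (p2, p4)} : ℤ) - (phiLine l {(p1, p4), (p2, p3)} : ℤ))
/-
Write `q = α p₁ + β pₓ + γ p₄` with positive barycentric weights and let `f = sideVal q p₁`, an
affine function vanishing at `p₁`. The triangle has nonempty interior, so it is nondegenerate:
`S = sideVal p₁ pₓ p₄ ≠ 0`. One computes `f pₓ = γ S` and `f p₄ = -β S`, so `f` takes opposite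
signs at `pₓ` and `p₄`. Since `pₓ` lies on `p₁p₃` and `f p₁ = 0`, `f p₃` has the sign of `f pₓ`;
since `pₓ` lies on `p₂p₄`, `f p₂` has it too. Convexity of the half planes `{f < 0}` and `{f > 0}`
finishes the proof.
-/

section AffineSegment

variable {E : Type*} [AddCommGroup E] [Module ℝ E] (f : E →ᵃ[ℝ] ℝ)

theorem AffineMap.apply_pos_of_mem_segment {a b x : E} (ha : 0 < f a) (hb : 0 < f b)
    (hx : x ∈ segment ℝ a b) : 0 < f x :=
  ((convex_Ioi 0).affine_preimage f).segment_subset ha hb hx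

theorem AffineMap.apply_neg_of_mem_segment_of_ne_left {a b x : E} (ha : f a = 0) (hb : f b < 0)
    (hx : x ∈ segment ℝ a b) (hxa : x ≠ a) : f x < 0 := by
  obtain ⟨s, t, -, ht, hst, rfl⟩ := hx
  have ht : 0 < t := ht.lt_of_ne <| by rintro rfl; simp_all
  rw [Convex.combo_affine_apply hst, ha, smul_eq_mul, smul_eq_mul, mul_zero, zero_add]
  exact mul_neg_of_pos_of_neg ht hb

theorem AffineMap.separates_segments_of_crossing {p₁ p₂ p₃ p₄ pₓ : E} (h₁ : f p₁ = 0)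
    (hₓ : 0 < f pₓ) (h₄ : f p₄ < 0) (h₁₃ : pₓ ∈ segment ℝ p₁ p₃) (h₂₄ : pₓ ∈ segment ℝ p₂ p₄) :
    (∀ x ∈ segment ℝ p₁ p₄, x ≠ p₁ → f x < 0) ∧ ∀ y ∈ segment ℝ p₂ p₃, 0 < f y := by
  have h₃ : 0 < f p₃ := by
    obtain ⟨s, t, -, ht, hst, rfl⟩ := h₁₃
    rw [Convex.combo_affine_apply hst, h₁, smul_eq_mul, smul_eq_mul, mul_zero, zero_add] at hₓ
    exact pos_of_mul_pos_right hₓ ht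
  have h₂ : 0 < f p₂ := by
    obtain ⟨s, t, hs, ht, hst, rfl⟩ := h₂₄
    rw [Convex.combo_affine_apply hst, smul_eq_mul, smul_eq_mul] at hₓ
    have : 0 < s * f p₂ := by nlinarith [mul_nonpos_of_nonneg_of_nonpos ht h₄.le]
    exact pos_of_mul_pos_right this hs
  exact ⟨fun x hx hxp₁ => f.apply_neg_of_mem_segment_of_ne_left h₁ h₄ hx hxp₁,
    fun y hy => f.apply_pos_of_mem_segment h₂ h₃ hy⟩

end AffineSegment

theorem affineIndependent_of_affineSpan_eq_top {k V P ι : Type*} [DivisionRing k]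
    [AddCommGroup V] [Module k V] [AddTorsor V P] [FiniteDimensional k V] [Fintype ι] {p : ι → P}
    (hcard : Fintype.card ι = Module.finrank k V + 1) (htop : affineSpan k (Set.range p) = ⊤) :
    AffineIndependent k p := by
  rw [affineIndependent_iff_finrank_vectorSpan_eq k p hcard,
    AffineSubspace.vectorSpan_eq_top_of_affineSpan_eq_top k V P htop, finrank_top]

def sideValAff (a b : Pl) : Pl →ᵃ[ℝ] ℝ where
  toFun := sideVal a b
  linear := (b.1 - a.1) • LinearMap.snd ℝ ℝ ℝ - (b.2 - a.2) • LinearMap.fst ℝ ℝ ℝ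
  map_vadd' x v := by simp [sideVal]; ring

@[simp]
theorem coe_sideValAff (a b : Pl) : ⇑(sideValAff a b) = sideVal a b := rfl

theorem collinear_of_sideVal_eq_zero {a b c : Pl} (h : sideVal a b c = 0) :
    Collinear ℝ ({a, b, c} : Set Pl) := by
  rcases eq_or_ne a b with rfl | hab
  · simpa using collinear_pair ℝ a c
  have hnorm : (b.1 - a.1) ^ 2 + (b.2 - a.2) ^ 2 ≠ 0 := by
    refine fun h0 => hab (Prod.ext ?_ ?_) <;> nlinarith [sq_nonneg (b.1 - a.1), sq_nonneg (b.2 - a.2)]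
  -- `r` is the coefficient of the orthogonal projection of `c - a` onto `b - a`
  set r := ((b.1 - a.1) * (c.1 - a.1) + (b.2 - a.2) * (c.2 - a.2)) /
    ((b.1 - a.1) ^ 2 + (b.2 - a.2) ^ 2)
  have hc : c = AffineMap.lineMap a b r := by
    unfold sideVal at h
    rw [AffineMap.lineMap_apply]
    refine Prod.ext ?_ ?_ <;> simp only [r, vsub_eq_sub, vadd_eq_add, Prod.fst_add, Prod.snd_add,
      Prod.smul_fst, Prod.smul_snd, Prod.fst_sub, Prod.snd_sub, smul_eq_mul] <;> field_simp
    · linear_combination -(b.2 - a.2) * h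
    · linear_combination (b.1 - a.1) * h
  have hmem : c ∈ line[ℝ, a, b] := hc ▸ AffineMap.lineMap_mem_affineSpan_pair r a b
  have := collinear_insert_of_mem_affineSpan_pair hmem
  rwa [Set.insert_comm, Set.pair_comm] at this

theorem sideVal_mul_sideVal_neg_of_mem_interior_convexHull {a b c q : Pl}
    (hq : q ∈ interior (convexHull ℝ {a, b, c})) : sideVal q a b * sideVal q a c < 0 := by
  have hrange : Set.range ![a, b, c] = {a, b, c} := by
    rw [Matrix.range_cons, Matrix.range_cons_cons_empty, Set.singleton_union]
  rw [← hrange] at hq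
  have htop := interior_convexHull_nonempty_iff_affineSpan_eq_top.mp ⟨q, hq⟩
  have hind := affineIndependent_of_affineSpan_eq_top (by simp) htop
  have hS : sideVal a b c ≠ 0 := fun h =>
    affineIndependent_iff_not_collinear_set.mp hind (collinear_of_sideVal_eq_zero h)
  let B : AffineBasis (Fin 3) ℝ Pl := ⟨_, hind, htop⟩
  have hpos : ∀ i, 0 < B.coord i q := by
    have hq' : q ∈ interior (convexHull ℝ (Set.range B)) := hq
    rwa [B.interior_convexHull] at hq'
  obtain ⟨α, β, γ, -, hβ, hγ, hsum, rfl⟩ : ∃ α β γ : ℝ, 0 < α ∧ 0 < β ∧ 0 < γ ∧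
      α + β + γ = 1 ∧ α • a + β • b + γ • c = q :=
    ⟨_, _, _, hpos 0, hpos 1, hpos 2, (Fin.sum_univ_three _).symm.trans (B.sum_coord_apply_eq_one q),
      (Fin.sum_univ_three _).symm.trans (B.linear_combination_coord_eq_self q)⟩
  obtain rfl : α = 1 - β - γ := by linarith
  have hb : sideVal ((1 - β - γ) • a + β • b + γ • c) a b = γ * sideVal a b c := by
    simp only [sideVal, Prod.fst_add, Prod.snd_add, Prod.smul_fst, Prod.smul_snd, smul_eq_mul]
    ring
  have hc : sideVal ((1 - β - γ) • a + β • b + γ • c) a c = -(β * sideVal a b c) := by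
    simp only [sideVal, Prod.fst_add, Prod.snd_add, Prod.smul_fst, Prod.smul_snd, smul_eq_mul]
    ring
  rw [hb, hc, show γ * sideVal a b c * -(β * sideVal a b c) = -(β * γ * sideVal a b c ^ 2) by ring,
    neg_lt_zero]
  positivity

theorem stmt0_general (p1 p2 p3 p4 q px : Pl)
    (hcross : segSet (p1, p3) ∩ segSet (p2, p4) = {px} ∧
      px ≠ p1 ∧ px ≠ p3 ∧ px ≠ p2 ∧ px ≠ p4)
    (hq : q ∈ interior (convexHull ℝ ({p1, px, p4} : Set Pl))) :
    ((∀ x ∈ segment ℝ p1 p4, x ≠ p1 → 0 < sideVal q p1 x) ∧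
      (∀ y ∈ segment ℝ p2 p3, sideVal q p1 y < 0)) ∨
    ((∀ x ∈ segment ℝ p1 p4, x ≠ p1 → sideVal q p1 x < 0) ∧
      (∀ y ∈ segment ℝ p2 p3, 0 < sideVal q p1 y)) := by
  obtain ⟨h₁₃, h₂₄⟩ : px ∈ segSet (p1, p3) ∩ segSet (p2, p4) := hcross.1 ▸ rfl
  have h₁ : sideVal q p1 p1 = 0 := by unfold sideVal; ring
  rcases mul_neg_iff.mp (sideVal_mul_sideVal_neg_of_mem_interior_convexHull hq) with
    ⟨hₓ, h₄⟩ | ⟨hₓ, h₄⟩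
  · right
    simpa using (sideValAff q p1).separates_segments_of_crossing h₁ hₓ h₄ h₁₃ h₂₄
  · left
    simpa using (-sideValAff q p1).separates_segments_of_crossing (by simpa using h₁) (by simpa)
      (by simpa) h₁₃ h₂₄

/-- if segments `p1p3` and `p2p4` cross at `px` and `q` lies strictly inside
triangle `p1 px p4`, then the line `q p1` strictly separates `p1p4 \ {p1}` from `p2p3`. -/
theorem stmt0 (p1 p2 p3 p4 q px : Pl)
    (hgp : GenPos ({p1, p2, p3, p4, q} : Set Pl))
    (hcross : segSet (p1, p3) ∩ segSet (p2, p4) = {px} ∧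
      px ≠ p1 ∧ px ≠ p3 ∧ px ≠ p2 ∧ px ≠ p4)
    (hq : q ∈ interior (convexHull ℝ ({p1, px, p4} : Set Pl))) :
    ((∀ x ∈ segment ℝ p1 p4, x ≠ p1 → 0 < sideVal q p1 x) ∧
      (∀ y ∈ segment ℝ p2 p3, sideVal q p1 y < 0)) ∨
    ((∀ x ∈ segment ℝ p1 p4, x ≠ p1 → sideVal q p1 x < 0) ∧
      (∀ y ∈ segment ℝ p2 p3, 0 < sideVal q p1 y)) :=
  stmt0_general p1 p2 p3 p4 q px hcross hq
end
end

section
/- Let p1p3 and p2p4 be two crossing segments and let ℓ be a line not through any of p1, p2, p3, p4. If ℓ crosses both of the segments p1p4 and p2p3, then ℓ crosses both of the segments p1p3 and p2p4. Consequently the number of segments among {p1p4, p2p3} crossed by ℓ is at most the number of segments among {p1p3, p2p4} crossed by ℓ. -/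
/-!
The line through `a ≠ b` is the zero set of the affine functional `sideVal a b`, so a line
avoiding the endpoints of a segment crosses it iff the functional takes opposite signs at them.
The segments `p1p3` and `p2p4` share a point, hence the line cannot put `p1, p3` strictly on
one side and `p2, p4` strictly on the other. If it separates `p1` from `p4` and `p2` from `p3`,
this forces it to separate `p1` from `p3`, and then `p2` from `p4`. For the count, the identity
`(s₁ s₄) (s₂ s₃) = (s₁ s₃) (s₂ s₄)` for `sᵢ = sideVal a b pᵢ` says that both pairs are crossed
equally often modulo 2.
-/

open scoped Classical

noncomputable section

def sideMap (a b : Pl) : Pl →ᵃ[ℝ] ℝ where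
  toFun := sideVal a b
  linear := (b.1 - a.1) • LinearMap.snd ℝ ℝ ℝ - (b.2 - a.2) • LinearMap.fst ℝ ℝ ℝ
  map_vadd' p v := by
    simp only [sideVal, vadd_eq_add, Prod.fst_add, Prod.snd_add, LinearMap.sub_apply,
      LinearMap.smul_apply, LinearMap.snd_apply, LinearMap.fst_apply, smul_eq_mul]
    ring

@[simp]
theorem sideMap_apply (a b x : Pl) : sideMap a b x = sideVal a b x := rfl

theorem mem_lineThrough_iff_mem_affineSpan_pair {a b : Pl} (hab : a ≠ b) (x : Pl) :
    x ∈ lineThrough a b ↔ x ∈ line[ℝ, a, b] := by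
  refine ⟨fun h ↦ h.mem_affineSpan_of_mem_of_ne (by simp) (by simp) (by simp) hab, fun h ↦ ?_⟩
  have hcol := collinear_insert_of_mem_affineSpan_pair h
  rwa [Set.insert_comm, Set.pair_comm] at hcol

theorem mem_lineThrough_iff_sideVal_eq_zero {a b : Pl} (hab : a ≠ b) (x : Pl) :
    x ∈ lineThrough a b ↔ sideVal a b x = 0 := by
  rw [mem_lineThrough_iff_mem_affineSpan_pair hab, mem_affineSpan_pair_iff_exists_lineMap_eq]
  constructor
  · rintro ⟨r, rfl⟩
    simp only [sideVal, AffineMap.lineMap_apply_module, Prod.fst_add, Prod.snd_add,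
      Prod.smul_fst, Prod.smul_snd, smul_eq_mul]
    ring
  · intro h
    set n := (b.1 - a.1) ^ 2 + (b.2 - a.2) ^ 2
    have hn : n ≠ 0 := fun hn ↦ hab <| Prod.ext
      (by nlinarith [sq_nonneg (b.1 - a.1), sq_nonneg (b.2 - a.2)])
      (by nlinarith [sq_nonneg (b.1 - a.1), sq_nonneg (b.2 - a.2)])
    -- `x - a` is parallel to `b - a`, so it is its orthogonal projection onto `b - a`
    refine ⟨((x.1 - a.1) * (b.1 - a.1) + (x.2 - a.2) * (b.2 - a.2)) / n, ?_⟩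
    simp only [sideVal] at h
    ext <;> simp only [AffineMap.lineMap_apply_module, Prod.fst_add, Prod.snd_add,
      Prod.smul_fst, Prod.smul_snd, smul_eq_mul] <;> field_simp
    · linear_combination (b.2 - a.2) * h
    · linear_combination -(b.1 - a.1) * h

section AffineFunctional

variable {E : Type*} [AddCommGroup E] [Module ℝ E] (f : E →ᵃ[ℝ] ℝ)

theorem AffineMap.apply_mem_uIcc_of_mem_segment {p q x : E} (hx : x ∈ segment ℝ p q) :
    f x ∈ Set.uIcc (f p) (f q) := by
  rw [← segment_eq_uIcc, ← image_segment]
  exact Set.mem_image_of_mem f hx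

theorem AffineMap.injOn_segment {p q : E} (hpq : f p ≠ f q) : Set.InjOn f (segment ℝ p q) := by
  rw [segment_eq_image_lineMap]
  refine Set.InjOn.image_of_comp ?_
  have hcomp : ⇑f ∘ AffineMap.lineMap p q = AffineMap.lineMap (f p) (f q) :=
    funext (AffineMap.apply_lineMap f p q)
  rw [hcomp]
  exact (AffineMap.lineMap_injective ℝ hpq).injOn

theorem AffineMap.pos_of_mem_segment {p q x : E} (hp : 0 < f p) (hq : 0 < f q)
    (hx : x ∈ segment ℝ p q) : 0 < f x :=
  ((convex_Ioi 0).affine_preimage f).segment_subset hp hq hx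

theorem AffineMap.not_separates_of_mem_segment_of_mem_segment {p₁ p₂ p₃ p₄ x : E}
    (h₁₃ : x ∈ segment ℝ p₁ p₃) (h₂₄ : x ∈ segment ℝ p₂ p₄) :
    ¬(0 < f p₁ ∧ 0 < f p₃ ∧ f p₂ < 0 ∧ f p₄ < 0) := by
  rintro ⟨h₁, h₃, h₂, h₄⟩
  have hpos := f.pos_of_mem_segment h₁ h₃ h₁₃
  have hneg := (-f).pos_of_mem_segment (by simpa) (by simpa) h₂₄
  simp only [AffineMap.coe_neg, Pi.neg_apply, Left.neg_pos_iff] at hneg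
  exact hneg.not_gt hpos

theorem AffineMap.exists_zeroSet_inter_segment_eq_singleton_iff {p q : E} (hp : f p ≠ 0)
    (hq : f q ≠ 0) :
    (∃ x, {y | f y = 0} ∩ segment ℝ p q = {x} ∧ x ≠ p ∧ x ≠ q) ↔ f p * f q < 0 := by
  constructor
  · rintro ⟨x, hx, -⟩
    obtain ⟨hx0, hxs⟩ : x ∈ {y | f y = 0} ∩ segment ℝ p q := hx ▸ rfl
    have h0 := f.apply_mem_uIcc_of_mem_segment hxs
    rw [show f x = 0 from hx0, Set.mem_uIcc] at h0
    rcases h0 with ⟨h₁, h₂⟩ | ⟨h₁, h₂⟩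
    · exact mul_neg_of_neg_of_pos (h₁.lt_of_ne hp) (h₂.lt_of_ne hq.symm)
    · exact mul_neg_of_pos_of_neg (h₂.lt_of_ne' hp) (h₁.lt_of_ne hq)
  · intro hpq
    have h0 : (0 : ℝ) ∈ segment ℝ (f p) (f q) := by
      rw [segment_eq_uIcc, Set.mem_uIcc]
      rcases mul_neg_iff.mp hpq with ⟨h₁, h₂⟩ | ⟨h₁, h₂⟩
      · exact Or.inr ⟨h₂.le, h₁.le⟩
      · exact Or.inl ⟨h₁.le, h₂.le⟩
    rw [← image_segment] at h0
    obtain ⟨x, hxs, hx0⟩ := h0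
    have hinj : Set.InjOn f (segment ℝ p q) :=
      f.injOn_segment fun h ↦ (mul_self_nonneg (f q)).not_gt (h ▸ hpq)
    refine ⟨x, Set.Subsingleton.eq_singleton_of_mem ?_ ⟨hx0, hxs⟩, ?_, ?_⟩
    · rintro y ⟨hy0, hys⟩ z ⟨hz0, hzs⟩
      exact hinj hys hzs (hy0.trans hz0.symm)
    · rintro rfl; exact hp hx0
    · rintro rfl; exact hq hx0

end AffineFunctional

theorem lineCross_lineThrough_iff {a b p q : Pl} (hab : a ≠ b) (hp : p ∉ lineThrough a b)
    (hq : q ∉ lineThrough a b) :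
    LineCross (lineThrough a b) (p, q) ↔ sideVal a b p * sideVal a b q < 0 := by
  have hl : lineThrough a b = {y | sideMap a b y = 0} :=
    Set.ext (mem_lineThrough_iff_sideVal_eq_zero hab)
  rw [mem_lineThrough_iff_sideVal_eq_zero hab] at hp hq
  rw [LineCross, hl]
  exact (sideMap a b).exists_zeroSet_inter_segment_eq_singleton_iff hp hq

section Signs

theorem mul_pos_iff_neg_iff_neg_of_ne_zero {x y : ℝ} (hx : x ≠ 0) (hy : y ≠ 0) :
    0 < x * y ↔ (x < 0 ↔ y < 0) := by
  rw [mul_pos_iff]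
  grind

variable {s₁ s₂ s₃ s₄ : ℝ}

theorem mul_neg_and_mul_neg_of_not_separated (h₁ : s₁ ≠ 0) (h₃ : s₃ ≠ 0)
    (hsep : ¬(0 < s₁ ∧ 0 < s₃ ∧ s₂ < 0 ∧ s₄ < 0))
    (hsep' : ¬(s₁ < 0 ∧ s₃ < 0 ∧ 0 < s₂ ∧ 0 < s₄))
    (h₁₄ : s₁ * s₄ < 0) (h₂₃ : s₂ * s₃ < 0) : s₁ * s₃ < 0 ∧ s₂ * s₄ < 0 := by
  have h₁₃ : s₁ * s₃ < 0 := by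
    by_contra! h
    rcases mul_pos_iff.mp (h.lt_of_ne' (mul_ne_zero h₁ h₃)) with ⟨h₁, h₃⟩ | ⟨h₁, h₃⟩
    · exact hsep ⟨h₁, h₃, neg_of_mul_neg_left h₂₃ h₃.le, neg_of_mul_neg_right h₁₄ h₁.le⟩
    · exact hsep' ⟨h₁, h₃, pos_of_mul_neg_left h₂₃ h₃.le, pos_of_mul_neg_right h₁₄ h₁.le⟩
  have h : 0 < (s₁ * s₃) * (s₂ * s₄) := by
    rw [show (s₁ * s₃) * (s₂ * s₄) = (s₁ * s₄) * (s₂ * s₃) by ring]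
    exact mul_pos_of_neg_of_neg h₁₄ h₂₃
  exact ⟨h₁₃, neg_of_mul_pos_right h h₁₃.le⟩

theorem crossing_count_le_of_not_separated (h₁ : s₁ ≠ 0) (h₂ : s₂ ≠ 0) (h₃ : s₃ ≠ 0)
    (h₄ : s₄ ≠ 0) (hsep : ¬(0 < s₁ ∧ 0 < s₃ ∧ s₂ < 0 ∧ s₄ < 0))
    (hsep' : ¬(s₁ < 0 ∧ s₃ < 0 ∧ 0 < s₂ ∧ 0 < s₄)) :
    (if s₁ * s₄ < 0 then 1 else 0) + (if s₂ * s₃ < 0 then 1 else 0) ≤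
      (if s₁ * s₃ < 0 then 1 else 0) + (if s₂ * s₄ < 0 then (1 : ℕ) else 0) := by
  have hboth := mul_neg_and_mul_neg_of_not_separated h₁ h₃ hsep hsep'
  have hparity : (s₁ * s₄ < 0 ↔ s₂ * s₃ < 0) ↔ (s₁ * s₃ < 0 ↔ s₂ * s₄ < 0) := by
    rw [← mul_pos_iff_neg_iff_neg_of_ne_zero (mul_ne_zero h₁ h₄) (mul_ne_zero h₂ h₃),
      ← mul_pos_iff_neg_iff_neg_of_ne_zero (mul_ne_zero h₁ h₃) (mul_ne_zero h₂ h₄)]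
    ring_nf
  split_ifs <;> simp_all

end Signs

theorem stmt1_general (p1 p2 p3 p4 a b : Pl) (hab : a ≠ b)
    (hcross : Cross (p1, p3) (p2, p4))
    (h1 : p1 ∉ lineThrough a b) (h2 : p2 ∉ lineThrough a b)
    (h3 : p3 ∉ lineThrough a b) (h4 : p4 ∉ lineThrough a b) :
    (LineCross (lineThrough a b) (p1, p4) → LineCross (lineThrough a b) (p2, p3) →
      LineCross (lineThrough a b) (p1, p3) ∧ LineCross (lineThrough a b) (p2, p4)) ∧
    ((if LineCross (lineThrough a b) (p1, p4) then 1 else 0) +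
        (if LineCross (lineThrough a b) (p2, p3) then 1 else 0) ≤
      (if LineCross (lineThrough a b) (p1, p3) then 1 else 0) +
        (if LineCross (lineThrough a b) (p2, p4) then (1 : ℕ) else 0)) := by
  obtain ⟨x, hx, -⟩ := hcross
  obtain ⟨hx₁₃, hx₂₄⟩ : x ∈ segSet (p1, p3) ∩ segSet (p2, p4) := hx ▸ rfl
  have hsep := (sideMap a b).not_separates_of_mem_segment_of_mem_segment hx₁₃ hx₂₄
  have hsep' := (-sideMap a b).not_separates_of_mem_segment_of_mem_segment hx₁₃ hx₂₄
  simp only [AffineMap.coe_neg, Pi.neg_apply, sideMap_apply, Left.neg_pos_iff,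
    Left.neg_neg_iff] at hsep hsep'
  have hside := fun p (hp : p ∉ lineThrough a b) ↦
    (mem_lineThrough_iff_sideVal_eq_zero hab p).not.mp hp
  simp only [lineCross_lineThrough_iff hab h1 h4, lineCross_lineThrough_iff hab h2 h3,
    lineCross_lineThrough_iff hab h1 h3, lineCross_lineThrough_iff hab h2 h4]
  exact ⟨mul_neg_and_mul_neg_of_not_separated (hside p1 h1) (hside p3 h3) hsep hsep',
    crossing_count_le_of_not_separated (hside p1 h1) (hside p2 h2) (hside p3 h3) (hside p4 h4)
      hsep hsep'⟩

/-- if a line crosses both new segments `p1p4` and `p2p3`, it crosses both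
old segments `p1p3` and `p2p4`; consequently the number of new segments crossed is at
most the number of old segments crossed. -/
theorem stmt1 (p1 p2 p3 p4 a b : Pl) (hab : a ≠ b)
    (hgp : GenPos ({p1, p2, p3, p4} : Set Pl))
    (hcross : Cross (p1, p3) (p2, p4))
    (h1 : p1 ∉ lineThrough a b) (h2 : p2 ∉ lineThrough a b)
    (h3 : p3 ∉ lineThrough a b) (h4 : p4 ∉ lineThrough a b) :
    (LineCross (lineThrough a b) (p1, p4) → LineCross (lineThrough a b) (p2, p3) →
      LineCross (lineThrough a b) (p1, p3) ∧ LineCross (lineThrough a b) (p2, p4)) ∧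
    ((if LineCross (lineThrough a b) (p1, p4) then 1 else 0) +
        (if LineCross (lineThrough a b) (p2, p3) then 1 else 0) ≤
      (if LineCross (lineThrough a b) (p1, p3) then 1 else 0) +
        (if LineCross (lineThrough a b) (p2, p4) then (1 : ℕ) else 0)) :=
  stmt1_general p1 p2 p3 p4 a b hab hcross h1 h2 h3 h4
end
end

section
/- Let p1p3 and p2p4 be two crossing segments and ℓ a line that strictly separates the segments p1p4 and p2p3 (no endpoint of these segments lies on ℓ). Then ℓ crosses both p1p3 and p2p4 but crosses neither p1p4 nor p2p3; hence the contribution of these four segments to Φ_ℓ drops by exactly 2 under the flip. -/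
open scoped Classical

noncomputable section

/-!
On a segment `[p, q]` the signed side `sideVal a b` is affine in the parameter, so it vanishes at
exactly one interior point when its values at `p` and `q` have opposite signs, and nowhere when it
keeps one strict sign along the segment. A line separating `p1p4` from `p2p3` puts `p1, p4` on one
side and `p2, p3` on the other, so each of `p1p3`, `p2p4` has its endpoints on opposite sides.
-/

open AffineMap

lemma sideVal_lineMap (a b p q : Pl) (t : ℝ) :
    sideVal a b (lineMap p q t) = (1 - t) * sideVal a b p + t * sideVal a b q := by
  simp only [lineMap_apply_module, sideVal, Prod.fst_add, Prod.snd_add, Prod.smul_fst,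
    Prod.smul_snd, smul_eq_mul]
  ring

lemma sideVal_swap (a b x : Pl) : sideVal b a x = -sideVal a b x := by
  simp only [sideVal]
  ring

lemma ne_of_sideVal_ne_zero {a b x : Pl} (h : sideVal a b x ≠ 0) : a ≠ b := by
  rintro rfl
  exact h (by simp only [sideVal]; ring)

lemma lineThrough_comm (a b : Pl) : lineThrough a b = lineThrough b a := by
  simp only [lineThrough, Set.insert_comm a b]

lemma sideVal_eq_zero_of_mem_lineThrough {a b x : Pl} (hx : x ∈ lineThrough a b) :
    sideVal a b x = 0 := by
  obtain ⟨v, hv⟩ := (collinear_iff_of_mem (Set.mem_insert a _)).1 hx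
  obtain ⟨r, rfl⟩ := hv b (by simp)
  obtain ⟨s, rfl⟩ := hv x (by simp)
  simp only [sideVal, vadd_eq_add, Prod.fst_add, Prod.snd_add, Prod.smul_fst, Prod.smul_snd,
    smul_eq_mul]
  ring

lemma mem_lineThrough_of_sideVal_eq_zero {a b x : Pl} (hab : a ≠ b) (hx : sideVal a b x = 0) :
    x ∈ lineThrough a b := by
  set d := b - a
  have hn : d.1 ^ 2 + d.2 ^ 2 ≠ 0 := by
    have hd : d ≠ 0 := sub_ne_zero.2 hab.symm
    contrapose! hd
    refine Prod.ext ?_ ?_ <;> simp only [Prod.fst_zero, Prod.snd_zero] <;>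
      nlinarith [sq_nonneg d.1, sq_nonneg d.2]
  -- orthogonal decomposition of `x - a` along `d`: the normal component is `sideVal a b x = 0`
  set c := ((x.1 - a.1) * d.1 + (x.2 - a.2) * d.2) / (d.1 ^ 2 + d.2 ^ 2)
  have hxd : x = c • d +ᵥ a := by
    simp only [sideVal] at hx
    simp only [c, d, Prod.fst_sub, Prod.snd_sub] at hn ⊢
    refine Prod.ext ?_ ?_
    · simp only [vadd_eq_add, Prod.fst_add, Prod.smul_fst, Prod.fst_sub, smul_eq_mul]
      field_simp
      linear_combination -(b.2 - a.2) * hx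
    · simp only [vadd_eq_add, Prod.snd_add, Prod.smul_snd, Prod.snd_sub, smul_eq_mul]
      field_simp
      linear_combination (b.1 - a.1) * hx
  refine (collinear_iff_of_mem (Set.mem_insert a _)).2 ⟨d, ?_⟩
  simp only [Set.mem_insert_iff, Set.mem_singleton_iff]
  rintro p (rfl | rfl | rfl)
  · exact ⟨0, by simp⟩
  · exact ⟨1, by simp [d]⟩
  · exact ⟨c, hxd⟩

lemma lineCross_comm (l : Set Pl) (p q : Pl) : LineCross l (p, q) ↔ LineCross l (q, p) := by
  simp only [LineCross, segSet, segment_symm ℝ q p]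
  exact exists_congr fun x => by tauto

lemma lineCross_of_pos_of_neg {a b p q : Pl} (hp : 0 < sideVal a b p) (hq : sideVal a b q < 0) :
    LineCross (lineThrough a b) (p, q) := by
  have hab : a ≠ b := ne_of_sideVal_ne_zero hp.ne'
  have hden : sideVal a b p - sideVal a b q ≠ 0 := by linarith
  have hzero {t : ℝ} : sideVal a b (lineMap p q t) = 0 ↔
      t = sideVal a b p / (sideVal a b p - sideVal a b q) := by
    rw [sideVal_lineMap, eq_div_iff hden]
    constructor <;> intro h <;> linarith
  set t₀ := sideVal a b p / (sideVal a b p - sideVal a b q)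
  have ht₀ : t₀ ∈ Set.Icc (0 : ℝ) 1 := by
    constructor
    · exact div_nonneg hp.le (by linarith)
    · rw [div_le_one (by linarith)]
      linarith
  have hx : sideVal a b (lineMap p q t₀) = 0 := hzero.2 rfl
  refine ⟨lineMap p q t₀, Set.eq_singleton_iff_unique_mem.2 ⟨⟨?_, ?_⟩, ?_⟩, ?_, ?_⟩
  · exact mem_lineThrough_of_sideVal_eq_zero hab hx
  · rw [segSet, segment_eq_image_lineMap]
    exact ⟨t₀, ht₀, rfl⟩
  · rintro y ⟨hyl, hys⟩
    rw [segSet, segment_eq_image_lineMap] at hys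
    obtain ⟨t, -, rfl⟩ := hys
    rw [hzero.1 (sideVal_eq_zero_of_mem_lineThrough hyl)]
  · intro h
    rw [h] at hx
    exact hp.ne' hx
  · intro h
    rw [h] at hx
    exact hq.ne hx

lemma not_lineCross_of_sideVal_ne_zero {a b : Pl} {s : Seg}
    (h : ∀ x ∈ segSet s, sideVal a b x ≠ 0) : ¬ LineCross (lineThrough a b) s := by
  rintro ⟨x, hx, -, -⟩
  have hmem : x ∈ lineThrough a b ∩ segSet s := hx ▸ rfl
  exact h x hmem.2 (sideVal_eq_zero_of_mem_lineThrough hmem.1)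

lemma lineCross_of_separates {a b p1 p2 p3 p4 : Pl}
    (h14 : ∀ x ∈ segSet (p1, p4), 0 < sideVal a b x)
    (h23 : ∀ y ∈ segSet (p2, p3), sideVal a b y < 0) :
    LineCross (lineThrough a b) (p1, p3) ∧ LineCross (lineThrough a b) (p2, p4) ∧
    ¬ LineCross (lineThrough a b) (p1, p4) ∧ ¬ LineCross (lineThrough a b) (p2, p3) := by
  have hp1 := h14 p1 (left_mem_segment ℝ p1 p4)
  have hp4 := h14 p4 (right_mem_segment ℝ p1 p4)
  have hp2 := h23 p2 (left_mem_segment ℝ p2 p3)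
  have hp3 := h23 p3 (right_mem_segment ℝ p2 p3)
  exact ⟨lineCross_of_pos_of_neg hp1 hp3,
    (lineCross_comm _ _ _).2 (lineCross_of_pos_of_neg hp4 hp2),
    not_lineCross_of_sideVal_ne_zero fun x hx => (h14 x hx).ne',
    not_lineCross_of_sideVal_ne_zero fun y hy => (h23 y hy).ne⟩

theorem stmt3_general (p1 p2 p3 p4 a b : Pl)
    (hsep : ((∀ x ∈ segSet (p1, p4), 0 < sideVal a b x) ∧
              (∀ y ∈ segSet (p2, p3), sideVal a b y < 0)) ∨
            ((∀ x ∈ segSet (p1, p4), sideVal a b x < 0) ∧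
              (∀ y ∈ segSet (p2, p3), 0 < sideVal a b y))) :
    LineCross (lineThrough a b) (p1, p3) ∧ LineCross (lineThrough a b) (p2, p4) ∧
    ¬ LineCross (lineThrough a b) (p1, p4) ∧ ¬ LineCross (lineThrough a b) (p2, p3) ∧
    (if LineCross (lineThrough a b) (p1, p3) then 1 else 0) +
        (if LineCross (lineThrough a b) (p2, p4) then 1 else 0) =
      ((if LineCross (lineThrough a b) (p1, p4) then 1 else 0) +
        (if LineCross (lineThrough a b) (p2, p3) then (1 : ℕ) else 0)) + 2 := by
  obtain ⟨h13, h24, h14, h23⟩ :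
      LineCross (lineThrough a b) (p1, p3) ∧ LineCross (lineThrough a b) (p2, p4) ∧
      ¬ LineCross (lineThrough a b) (p1, p4) ∧ ¬ LineCross (lineThrough a b) (p2, p3) := by
    rcases hsep with ⟨h14, h23⟩ | ⟨h14, h23⟩
    · exact lineCross_of_separates h14 h23
    · rw [lineThrough_comm]
      exact lineCross_of_separates (fun x hx => sideVal_swap a b x ▸ neg_pos.2 (h14 x hx))
        (fun y hy => sideVal_swap a b y ▸ neg_lt_zero.2 (h23 y hy))
  simp [h13, h24, h14, h23]

/-- if a line strictly separates the new segments `p1p4` and `p2p3`, then it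
crosses both old segments `p1p3`, `p2p4` and neither new segment; hence the contribution
of these four segments to `Φ_ℓ` drops by exactly 2 under the flip. -/
theorem stmt3 (p1 p2 p3 p4 a b : Pl) (hab : a ≠ b)
    (hgp : GenPos ({p1, p2, p3, p4} : Set Pl))
    (hcross : Cross (p1, p3) (p2, p4))
    (hsep : ((∀ x ∈ segSet (p1, p4), 0 < sideVal a b x) ∧
              (∀ y ∈ segSet (p2, p3), sideVal a b y < 0)) ∨
            ((∀ x ∈ segSet (p1, p4), sideVal a b x < 0) ∧
              (∀ y ∈ segSet (p2, p3), 0 < sideVal a b y))) :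
    LineCross (lineThrough a b) (p1, p3) ∧ LineCross (lineThrough a b) (p2, p4) ∧
    ¬ LineCross (lineThrough a b) (p1, p4) ∧ ¬ LineCross (lineThrough a b) (p2, p3) ∧
    (if LineCross (lineThrough a b) (p1, p3) then 1 else 0) +
        (if LineCross (lineThrough a b) (p2, p4) then 1 else 0) =
      ((if LineCross (lineThrough a b) (p1, p4) then 1 else 0) +
        (if LineCross (lineThrough a b) (p2, p3) then (1 : ℕ) else 0)) + 2 :=
  stmt3_general p1 p2 p3 p4 a b hsep
end
end

section
/- For points in convex position, a flip strictly decreases the number of crossing pairs: if M is a perfect matching on a set of points in convex position and M' is obtained from M by flipping a crossing pair (replacing p1p3, p2p4 by the non-crossing pair p1p4, p2p3), then Φ_X(M') < Φ_X(M), where Φ_X counts the number of crossing pairs of segments. -/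
open scoped Classical

noncomputable section

/-!
Let `qr` be a segment of the matching other than the two flipped ones. Its endpoints lie outside
the convex hull `Q` of the four flipped endpoints. If `qr` misses `Q`, it crosses none of the
segments spanned by those endpoints. Otherwise such a segment crosses `qr` exactly when its
endpoints lie strictly on opposite sides of the line `qr`. Since `p₁p₃` and `p₂p₄` cross, if each
of them lies on one side of that line, both lie on the same side; the possible sign patterns then
show that `qr` crosses at most as many of the new segments as of the old ones. The flipped pair
itself contributes one crossing before the flip and none after.
-/

lemma AffineMap.injOn_segment_s6 {E F : Type*} [AddCommGroup E] [Module ℝ E] [AddCommGroup F]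
    [Module ℝ F] (f : E →ᵃ[ℝ] F) {a b : E} (h : f a ≠ f b) : Set.InjOn f (segment ℝ a b) := by
  rw [segment_eq_image_lineMap]
  rintro _ ⟨s, -, rfl⟩ _ ⟨t, -, rfl⟩ hst
  rw [AffineMap.apply_lineMap, AffineMap.apply_lineMap] at hst
  rw [AffineMap.lineMap_injective ℝ h hst]

lemma mem_segment_of_mem_line {E : Type*} [AddCommGroup E] [Module ℝ E] {Q : Set E}
    (hQ : Convex ℝ Q) {q r u v : E} (hq : q ∉ Q) (hr : r ∉ Q) (hu : u ∈ segment ℝ q r)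
    (huQ : u ∈ Q) (hv : v ∈ line[ℝ, q, r]) (hvQ : v ∈ Q) : v ∈ segment ℝ q r := by
  -- The parameters along the line of the points of `Q` form an interval that contains the
  -- parameter of `u` in `[0, 1]` but neither `0` nor `1`.
  have hI : (AffineMap.lineMap q r ⁻¹' Q : Set ℝ).OrdConnected :=
    (hQ.affine_preimage (AffineMap.lineMap q r)).ordConnected
  rw [segment_eq_image_lineMap] at hu ⊢
  obtain ⟨μ, ⟨hμ0, hμ1⟩, rfl⟩ := hu
  obtain ⟨τ, rfl⟩ := (mem_affineSpan_pair_iff_exists_lineMap_eq).mp hv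
  refine ⟨τ, ⟨?_, ?_⟩, rfl⟩
  · by_contra! hτ
    exact hq (by simpa using hI.out hvQ huQ ⟨hτ.le, hμ0⟩)
  · by_contra! hτ
    exact hr (by simpa using hI.out huQ hvQ ⟨hμ1, hτ.le⟩)

lemma ConvexPos.notMem_convexHull {S A : Set Pl} (h : ConvexPos S) (hA : A ⊆ S) {p : Pl}
    (hp : p ∈ S) (hpA : p ∉ A) : p ∉ convexHull ℝ A :=
  fun hmem => h p hp <| convexHull_mono (show A ⊆ S \ {p} from
    fun _ hx => ⟨hA hx, fun hxp => hpA (hxp ▸ hx)⟩) hmem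

def sideAffine (q r : Pl) : Pl →ᵃ[ℝ] ℝ where
  toFun := sideVal q r
  linear := (r.1 - q.1) • LinearMap.snd ℝ ℝ ℝ - (r.2 - q.2) • LinearMap.fst ℝ ℝ ℝ
  map_vadd' p v := by simp [sideVal]; ring

@[simp] lemma coe_sideAffine (q r : Pl) : ⇑(sideAffine q r) = sideVal q r := rfl

lemma sideVal_mem_uIcc {q r a b x : Pl} (hx : x ∈ segment ℝ a b) :
    sideVal q r x ∈ Set.uIcc (sideVal q r a) (sideVal q r b) := by
  rw [← segment_eq_uIcc, ← coe_sideAffine, ← image_segment]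
  exact Set.mem_image_of_mem _ hx

lemma sideVal_eq_zero_of_mem_segment {q r x : Pl} (hx : x ∈ segment ℝ q r) :
    sideVal q r x = 0 := by
  have h := sideVal_mem_uIcc (q := q) (r := r) hx
  rwa [show sideVal q r q = 0 by simp [sideVal], show sideVal q r r = 0 by simp [sideVal]; ring,
    Set.uIcc_self, Set.mem_singleton_iff] at h

lemma sideVal_mul_nonpos_of_mem_segment {q r a b x : Pl} (hx : x ∈ segment ℝ a b)
    (h : sideVal q r x = 0) : sideVal q r a * sideVal q r b ≤ 0 := by
  have := sideVal_mem_uIcc (q := q) (r := r) hx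
  rw [h, Set.mem_uIcc] at this
  rcases this with ⟨h1, h2⟩ | ⟨h1, h2⟩
  · exact mul_nonpos_of_nonpos_of_nonneg h1 h2
  · exact mul_nonpos_of_nonneg_of_nonpos h2 h1

lemma sideVal_mul_pos_of_mem_segment {q r a b x : Pl} (hx : x ∈ segment ℝ a b)
    (h : 0 < sideVal q r a * sideVal q r b) : 0 < sideVal q r a * sideVal q r x := by
  have := sideVal_mem_uIcc (q := q) (r := r) hx
  rw [Set.mem_uIcc] at this
  rcases pos_and_pos_or_neg_and_neg_of_mul_pos h with ⟨ha, hb⟩ | ⟨ha, hb⟩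
  · exact mul_pos ha (by rcases this with ⟨h1, -⟩ | ⟨h1, -⟩ <;> linarith)
  · exact mul_pos_of_neg_of_neg ha (by rcases this with ⟨-, h2⟩ | ⟨-, h2⟩ <;> linarith)

lemma exists_sideVal_eq_zero_of_mul_neg {q r a b : Pl}
    (h : sideVal q r a * sideVal q r b < 0) : ∃ v ∈ segment ℝ a b, sideVal q r v = 0 := by
  have h0 : (0 : ℝ) ∈ segment ℝ (sideAffine q r a) (sideAffine q r b) := by
    rw [segment_eq_uIcc, Set.mem_uIcc]
    rcases mul_neg_iff.mp h with ⟨h1, h2⟩ | ⟨h1, h2⟩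
    · exact Or.inr ⟨h2.le, h1.le⟩
    · exact Or.inl ⟨h1.le, h2.le⟩
  rwa [← image_segment] at h0

lemma mem_line_of_sideVal_eq_zero {q r v : Pl} (hqr : q ≠ r) (h : sideVal q r v = 0) :
    v ∈ line[ℝ, q, r] := by
  rw [mem_affineSpan_pair_iff_exists_lineMap_eq]
  simp only [sideVal] at h
  rcases (not_and_or.mp fun h' : r.1 - q.1 = 0 ∧ r.2 - q.2 = 0 =>
    hqr (Prod.ext (by linarith [h'.1]) (by linarith [h'.2]))) with hne | hne
  · refine ⟨(v.1 - q.1) / (r.1 - q.1), Prod.ext ?_ ?_⟩ <;>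
      simp only [AffineMap.lineMap_apply_module, Prod.fst_add, Prod.snd_add, Prod.smul_fst,
        Prod.smul_snd, smul_eq_mul] <;> field_simp
    · ring
    · linear_combination -h
  · refine ⟨(v.2 - q.2) / (r.2 - q.2), Prod.ext ?_ ?_⟩ <;>
      simp only [AffineMap.lineMap_apply_module, Prod.fst_add, Prod.snd_add, Prod.smul_fst,
        Prod.smul_snd, smul_eq_mul] <;> field_simp
    · linear_combination h
    · ring

lemma sideVal_ne_zero {S : Set Pl} (hgp : GenPos S) {q r p : Pl} (hq : q ∈ S) (hr : r ∈ S)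
    (hp : p ∈ S) (hqr : q ≠ r) (hpq : p ≠ q) (hpr : p ≠ r) : sideVal q r p ≠ 0 :=
  fun h => hgp p hp q hq r hr hpq hpr hqr
    (collinear_insert_of_mem_affineSpan_pair (mem_line_of_sideVal_eq_zero hqr h))

lemma Cross.symm {s t : Seg} (h : Cross s t) : Cross t s := by
  obtain ⟨x, hx, h1, h2, h3, h4⟩ := h
  exact ⟨x, Set.inter_comm _ _ ▸ hx, h3, h4, h1, h2⟩

lemma not_cross_self (s : Seg) : ¬ Cross s s := by
  rintro ⟨x, hx, h1, -⟩
  have : s.1 ∈ segSet s ∩ segSet s := ⟨left_mem_segment ℝ _ _, left_mem_segment ℝ _ _⟩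
  exact h1 (hx ▸ this).symm

lemma Cross.exists_mem {s t : Seg} (h : Cross s t) : ∃ x, x ∈ segSet s ∧ x ∈ segSet t := by
  obtain ⟨x, hx, -⟩ := h
  exact ⟨x, (hx.symm ▸ rfl : x ∈ segSet s ∩ segSet t)⟩

lemma Cross.sideVal_mul_neg {a b q r : Pl} (h : Cross (a, b) (q, r))
    (ha : sideVal q r a ≠ 0) (hb : sideVal q r b ≠ 0) : sideVal q r a * sideVal q r b < 0 := by
  obtain ⟨x, hxab, hxqr⟩ := h.exists_mem
  exact (sideVal_mul_nonpos_of_mem_segment hxab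
    (sideVal_eq_zero_of_mem_segment hxqr)).lt_of_ne (mul_ne_zero ha hb)

lemma Cross.sideVal_mul_pos {q r a b c d : Pl} (h : Cross (a, b) (c, d))
    (hab : 0 < sideVal q r a * sideVal q r b) (hcd : 0 < sideVal q r c * sideVal q r d) :
    0 < sideVal q r a * sideVal q r c := by
  obtain ⟨x, hxab, hxcd⟩ := h.exists_mem
  have hax := sideVal_mul_pos_of_mem_segment hxab hab
  have hcx := sideVal_mul_pos_of_mem_segment hxcd hcd
  nlinarith [mul_pos hax hcx, mul_self_nonneg (sideVal q r x)]

lemma cross_of_sideVal_mul_neg {Q : Set Pl} (hQ : Convex ℝ Q) {a b q r u : Pl}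
    (habQ : segment ℝ a b ⊆ Q) (hq : q ∉ Q) (hr : r ∉ Q) (hu : u ∈ segment ℝ q r)
    (huQ : u ∈ Q) (h : sideVal q r a * sideVal q r b < 0) : Cross (a, b) (q, r) := by
  have hqr : q ≠ r := by
    rintro rfl
    simp [sideVal] at h
  have ha : sideVal q r a ≠ 0 := by rintro h0; simp [h0] at h
  have hb : sideVal q r b ≠ 0 := by rintro h0; simp [h0] at h
  obtain ⟨v, hvab, hv⟩ := exists_sideVal_eq_zero_of_mul_neg h
  have hvQ : v ∈ Q := habQ hvab
  have hvqr : v ∈ segment ℝ q r :=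
    mem_segment_of_mem_line hQ hq hr hu huQ (mem_line_of_sideVal_eq_zero hqr hv) hvQ
  refine ⟨v, Set.eq_singleton_iff_unique_mem.mpr ⟨⟨hvab, hvqr⟩, ?_⟩, ?_, ?_, ?_, ?_⟩
  · rintro w ⟨hwab, hwqr⟩
    refine (sideAffine q r).injOn_segment_s6 (fun hab => ?_) hwab hvab ?_
    · have hab : sideVal q r a = sideVal q r b := hab
      exact (mul_self_nonneg _).not_gt (hab ▸ h)
    · simp [sideVal_eq_zero_of_mem_segment hwqr, hv]
  · rintro rfl; exact ha hv
  · rintro rfl; exact hb hv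
  · rintro rfl; exact hq hvQ
  · rintro rfl; exact hr hvQ

/-- The sign pattern of a flip: `sᵢ` is the side of `pᵢ` relative to a line, `A`, `B` say that
the line's segment crosses `p₁p₄`, `p₂p₃`, and `C`, `D` that it crosses `p₁p₃`, `p₂p₄`. -/
lemma ite_add_ite_le_of_signs {s₁ s₂ s₃ s₄ : ℝ} (h₁ : s₁ ≠ 0) (h₂ : s₂ ≠ 0) (h₃ : s₃ ≠ 0)
    (h₄ : s₄ ≠ 0) (hsame : 0 < s₁ * s₃ → 0 < s₂ * s₄ → 0 < s₁ * s₂) {A B C D : Prop}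
    (hA : A → s₁ * s₄ < 0) (hB : B → s₂ * s₃ < 0) (hC : s₁ * s₃ < 0 → C)
    (hD : s₂ * s₄ < 0 → D) :
    (if A then 1 else 0) + (if B then 1 else 0) ≤ (if C then 1 else 0) + (if D then 1 else 0) := by
  have hC' : ¬ C → 0 < s₁ * s₃ := fun h =>
    (not_lt.mp (mt hC h)).lt_of_ne' (mul_ne_zero h₁ h₃)
  have hD' : ¬ D → 0 < s₂ * s₄ := fun h =>
    (not_lt.mp (mt hD h)).lt_of_ne' (mul_ne_zero h₂ h₄)
  have hboth : A → B → 0 < (s₁ * s₃) * (s₂ * s₄) := fun hA' hB' => by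
    nlinarith [mul_pos_of_neg_of_neg (hA hA') (hB hB')]
  have hnone : 0 < s₁ * s₃ → 0 < s₂ * s₄ → ¬ A ∧ ¬ B := fun h13 h24 => by
    have h12 := hsame h13 h24
    have h2 : 0 < s₂ * s₂ := mul_self_pos.mpr h₂
    have h1 : 0 < s₁ * s₁ := mul_self_pos.mpr h₁
    refine ⟨fun hA' => ?_, fun hB' => ?_⟩
    · nlinarith [hA hA', mul_pos h12 h24]
    · nlinarith [hB hB', mul_pos h12 h13]
  by_cases hc : C <;> by_cases hd : D
  · split_ifs <;> omega
  · have : ¬ (A ∧ B) := fun ⟨ha, hb⟩ =>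
      (hnone (pos_of_mul_pos_left (hboth ha hb) (hD' hd).le) (hD' hd)).1 ha
    split_ifs <;> simp_all
  · have : ¬ (A ∧ B) := fun ⟨ha, hb⟩ =>
      (hnone (hC' hc) (pos_of_mul_pos_right (hboth ha hb) (hC' hc).le)).1 ha
    split_ifs <;> simp_all
  · obtain ⟨ha, hb⟩ := hnone (hC' hc) (hD' hd)
    simp [ha, hb]

lemma ite_cross_flip_le {S : Set Pl} (hconv : ConvexPos S) (hgp : GenPos S)
    {p₁ p₂ p₃ p₄ q r : Pl} (h₁ : p₁ ∈ S) (h₂ : p₂ ∈ S) (h₃ : p₃ ∈ S) (h₄ : p₄ ∈ S)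
    (hq : q ∈ S) (hr : r ∈ S) (hqr : q ≠ r)
    (hdisj : Disjoint ({q, r} : Set Pl) ({p₁, p₃} ∪ {p₂, p₄}))
    (hc : Cross (p₁, p₃) (p₂, p₄)) :
    (if Cross (p₁, p₄) (q, r) then 1 else 0) + (if Cross (p₂, p₃) (q, r) then 1 else 0) ≤
      (if Cross (p₁, p₃) (q, r) then 1 else 0) + (if Cross (p₂, p₄) (q, r) then 1 else 0) := by
  set V : Set Pl := {p₁, p₃} ∪ {p₂, p₄}
  set Q := convexHull ℝ V
  have hv₁ : p₁ ∈ V := by simp [V]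
  have hv₂ : p₂ ∈ V := by simp [V]
  have hv₃ : p₃ ∈ V := by simp [V]
  have hv₄ : p₄ ∈ V := by simp [V]
  have hVS : V ⊆ S := by
    rintro x ((rfl | rfl) | (rfl | rfl)) <;> assumption
  have hseg : ∀ a ∈ V, ∀ b ∈ V, segment ℝ a b ⊆ Q := fun a ha b hb =>
    (convex_convexHull ℝ V).segment_subset (subset_convexHull ℝ V ha) (subset_convexHull ℝ V hb)
  have hqV : q ∉ V := Set.disjoint_left.mp hdisj (by simp)
  have hrV : r ∉ V := Set.disjoint_left.mp hdisj (by simp)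
  have hqQ := hconv.notMem_convexHull hVS hq hqV
  have hrQ := hconv.notMem_convexHull hVS hr hrV
  have hside : ∀ p ∈ V, sideVal q r p ≠ 0 := fun p hp =>
    sideVal_ne_zero hgp hq hr (hVS hp) hqr (fun h => hqV (h ▸ hp)) (fun h => hrV (h ▸ hp))
  by_cases hmeet : ∃ u ∈ segment ℝ q r, u ∈ Q
  · obtain ⟨u, hu, huQ⟩ := hmeet
    have hcross : ∀ a ∈ V, ∀ b ∈ V, sideVal q r a * sideVal q r b < 0 → Cross (a, b) (q, r) :=
      fun a ha b hb => cross_of_sideVal_mul_neg (convex_convexHull ℝ V) (hseg a ha b hb)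
        hqQ hrQ hu huQ
    exact ite_add_ite_le_of_signs (hside p₁ hv₁) (hside p₂ hv₂) (hside p₃ hv₃) (hside p₄ hv₄)
      hc.sideVal_mul_pos (fun h => h.sideVal_mul_neg (hside p₁ hv₁) (hside p₄ hv₄))
      (fun h => h.sideVal_mul_neg (hside p₂ hv₂) (hside p₃ hv₃))
      (hcross p₁ hv₁ p₃ hv₃) (hcross p₂ hv₂ p₄ hv₄)
  · have hnot : ∀ a ∈ V, ∀ b ∈ V, ¬ Cross (a, b) (q, r) := fun a ha b hb h => by
      obtain ⟨x, hxab, hxqr⟩ := h.exists_mem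
      exact hmeet ⟨x, hxqr, hseg a ha b hb hxab⟩
    simp [hnot p₁ hv₁ p₄ hv₄, hnot p₂ hv₂ p₃ hv₃]

def crossPairs (M : Finset Seg) : Set (Sym2 Seg) :=
  {z | ∃ u t : Seg, z = s(u, t) ∧ u ∈ M ∧ t ∈ M ∧ Cross u t}

lemma phiX_eq_ncard_crossPairs (M : Finset Seg) : phiX M = (crossPairs M).ncard := rfl

lemma crossPairs_finite (M : Finset Seg) : (crossPairs M).Finite :=
  ((M.finite_toSet.prod M.finite_toSet).image fun p => s(p.1, p.2)).subset <| by
    rintro _ ⟨u, t, rfl, hu, ht, -⟩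
    exact ⟨(u, t), ⟨hu, ht⟩, rfl⟩

lemma crossPairs_insert (a : Seg) (M : Finset Seg) :
    crossPairs (insert a M) = (fun t => s(a, t)) '' {t | t ∈ M ∧ Cross a t} ∪ crossPairs M := by
  ext z
  constructor
  · rintro ⟨u, t, rfl, hu, ht, h⟩
    rw [Finset.mem_insert] at hu ht
    rcases hu with rfl | hu <;> rcases ht with rfl | ht
    · exact absurd h (not_cross_self _)
    · exact Or.inl ⟨t, ⟨ht, h⟩, rfl⟩
    · exact Or.inl ⟨u, ⟨hu, h.symm⟩, Sym2.eq_swap⟩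
    · exact Or.inr ⟨u, t, rfl, hu, ht, h⟩
  · rintro (⟨t, ⟨ht, h⟩, rfl⟩ | ⟨u, t, rfl, hu, ht, h⟩)
    · exact ⟨a, t, rfl, Finset.mem_insert_self _ _, Finset.mem_insert_of_mem ht, h⟩
    · exact ⟨u, t, rfl, Finset.mem_insert_of_mem hu, Finset.mem_insert_of_mem ht, h⟩

lemma mem_of_mem_crossPairs {M : Finset Seg} {z : Sym2 Seg} (hz : z ∈ crossPairs M) {a : Seg}
    (ha : a ∈ z) : a ∈ M := by
  obtain ⟨u, t, rfl, hu, ht, -⟩ := hz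
  rcases Sym2.mem_iff.mp ha with rfl | rfl <;> assumption

lemma phiX_insert {a : Seg} {M : Finset Seg} (ha : a ∉ M) :
    phiX (insert a M) = phiX M + (M.filter (Cross a)).card := by
  have hdisj : Disjoint ((fun t => s(a, t)) '' {t | t ∈ M ∧ Cross a t}) (crossPairs M) :=
    Set.disjoint_left.mpr fun _ ⟨_, _, hz⟩ hM =>
      ha (mem_of_mem_crossPairs hM (hz ▸ Sym2.mem_mk_left _ _))
  rw [phiX_eq_ncard_crossPairs, phiX_eq_ncard_crossPairs, crossPairs_insert,
    Set.ncard_union_eq hdisj (Set.toFinite _) (crossPairs_finite M),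
    Set.ncard_image_of_injective (f := fun t => s(a, t)) _ (Sym2.mkEmbedding a).injective,
    add_comm]
  congr
  rw [← Set.ncard_coe_finset, Finset.coe_filter]

lemma phiX_insert_insert {a b : Seg} {M : Finset Seg} (ha : a ∉ insert b M) (hb : b ∉ M) :
    phiX (insert a (insert b M)) = phiX M + (M.filter (Cross a)).card +
      (M.filter (Cross b)).card + if Cross a b then 1 else 0 := by
  rw [phiX_insert ha, phiX_insert hb, Finset.filter_insert]
  split_ifs with h
  · rw [Finset.card_insert_of_notMem (fun hm => hb (Finset.mem_filter.mp hm).1)]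
    ring
  · ring

lemma IsMatching.disjoint {M : Finset Seg} (hM : IsMatching M) {s t : Seg} (hs : s ∈ M)
    (ht : t ∈ M) (hst : s ≠ t) : Disjoint ({s.1, s.2} : Set Pl) {t.1, t.2} :=
  Set.disjoint_iff_inter_eq_empty.mpr (hM.2 s hs t ht hst)

lemma Finset.union_pair_eq_insert_insert {α : Type*} [DecidableEq α] (s : Finset α) (a b : α) :
    s ∪ {a, b} = insert a (insert b s) := by
  rw [Finset.union_insert, Finset.union_comm, ← Finset.insert_eq]

/-- for points in convex position, a flip strictly decreases the number of
crossing pairs. -/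
theorem stmt6 (P : Finset Pl) (hconv : ConvexPos (P : Set Pl)) (hgp : GenPos (P : Set Pl))
    (M M' : Finset Seg) (hpm : IsPM P M)
    (p1 p2 p3 p4 : Pl)
    (h13 : (p1, p3) ∈ M) (h24 : (p2, p4) ∈ M)
    (hc : Cross (p1, p3) (p2, p4)) (hnc : ¬ Cross (p1, p4) (p2, p3))
    (hM' : M' = (M \ {(p1, p3), (p2, p4)}) ∪ {(p1, p4), (p2, p3)}) :
    phiX M' < phiX M := by
  obtain ⟨hmatch, hin, -⟩ := hpm
  set T := M \ {(p1, p3), (p2, p4)}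
  have hne : ((p1, p3) : Seg) ≠ (p2, p4) := fun h => not_cross_self _ (h ▸ hc)
  have hd := hmatch.disjoint h13 h24 hne
  have h12 : p1 ≠ p2 := fun h => Set.not_disjoint_iff.mpr ⟨p1, by simp, by simp [h]⟩ hd
  have h34 : p3 ≠ p4 := fun h => Set.not_disjoint_iff.mpr ⟨p3, by simp, by simp [h]⟩ hd
  have h14M : ((p1, p4) : Seg) ∉ M := fun hm =>
    Set.not_disjoint_iff.mpr ⟨p1, by simp, by simp⟩ (hmatch.disjoint hm h13 (by simp [h34.symm]))
  have h23M : ((p2, p3) : Seg) ∉ M := fun hm =>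
    Set.not_disjoint_iff.mpr ⟨p2, by simp, by simp⟩ (hmatch.disjoint hm h24 (by simp [h34]))
  have hM : M = insert (p1, p3) (insert (p2, p4) T) := by
    rw [← Finset.union_pair_eq_insert_insert, Finset.sdiff_union_of_subset]
    simp [Finset.insert_subset_iff, h13, h24]
  rw [hM', Finset.union_pair_eq_insert_insert, phiX_insert_insert (by simp [T, h12, h14M])
    (by simp [T, h23M]), if_neg hnc, hM, phiX_insert_insert (by simp [T, hne]) (by simp [T]),
    if_pos hc]
  have hflip : (T.filter (Cross (p1, p4))).card + (T.filter (Cross (p2, p3))).card ≤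
      (T.filter (Cross (p1, p3))).card + (T.filter (Cross (p2, p4))).card := by
    simp only [Finset.card_filter, ← Finset.sum_add_distrib]
    refine Finset.sum_le_sum fun e he => ?_
    obtain ⟨heM, he'⟩ := Finset.mem_sdiff.mp he
    simp only [Finset.mem_insert, Finset.mem_singleton, not_or] at he'
    exact ite_cross_flip_le hconv hgp (hin _ h13).1 (hin _ h24).1 (hin _ h13).2 (hin _ h24).2
      (hin e heM).1 (hin e heM).2 (hmatch.1 e heM) (Set.disjoint_union_right.mpr
        ⟨hmatch.disjoint heM h13 he'.1, hmatch.disjoint heM h24 he'.2⟩) hc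
  omega
end
end
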